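/- Let φ⁰ : ℝ → ℝ be bounded and continuous, define φ(x,t) = ∫_ℝ G_t(x e^{−t} − y) φ⁰(y) dy for t > 0, and set δρ = (2π)^{−1/2} ∫_ℝ e^{−y²/2} φ⁰(y) dy. Then for every x ∈ ℝ, φ(x,t) → δρ as t → ∞, and the convergence is exponentially fast uniformly on compact sets: for every compact interval I ⊂ ℝ there exists C > 0 such that sup_{x∈I} |φ(x,t) − δρ| ≤ C e^{−t} for all t ≥ 1. -/
import Mathlib


open Real MeasureTheory Filter

noncomputable section

/-- The Gaussian kernel `G_t` of variance `1 − e^{−2t}`. -/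
def Gk (t ξ : ℝ) : ℝ :=
  (2 * π * (1 - Real.exp (-2 * t))) ^ (-(1 : ℝ) / 2) *
    Real.exp (-ξ ^ 2 / (2 * (1 - Real.exp (-2 * t))))

lemma exp_sub_exp_le (a b c : ℝ) (ha : a ≤ c) (hb : b ≤ c) :
    |Real.exp a - Real.exp b| ≤ |a - b| * Real.exp c := by
  have key : ∀ u v : ℝ, u ≤ v → v ≤ c → Real.exp v - Real.exp u ≤ (v - u) * Real.exp c := by
    intro u v huv hvc
    have h1 := Real.add_one_le_exp (u - v)
    have h2 : Real.exp (u - v) * Real.exp v = Real.exp u := by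
      rw [← Real.exp_add]; ring_nf
    have h3 : Real.exp v ≤ Real.exp c := Real.exp_le_exp.2 hvc
    have h4 : (0:ℝ) < Real.exp v := Real.exp_pos v
    nlinarith
  rcases le_total a b with h | h
  · rw [abs_sub_comm, abs_of_nonneg (sub_nonneg.2 (Real.exp_le_exp.2 h)),
      abs_sub_comm a b, abs_of_nonneg (sub_nonneg.2 h)]
    exact key a b h hb
  · rw [abs_of_nonneg (sub_nonneg.2 (Real.exp_le_exp.2 h)), abs_of_nonneg (sub_nonneg.2 h)]
    exact key b a h ha

lemma auxA1 (R ε ξ : ℝ) (hR : 1 ≤ R) (hε1 : ε ≤ 1) (hξ : |ξ| ≤ R * ε) : |ξ| ≤ R := by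
  nlinarith [abs_nonneg ξ]

lemma auxA2 (R ξ y : ℝ) (hξ : |ξ| ≤ R) : -(ξ - y) ^ 2 / 2 ≤ -y ^ 2 / 4 + R ^ 2 := by
  have h1 : ξ * y ≤ R * |y| :=
    le_trans (le_abs_self _)
      (by rw [abs_mul]; exact mul_le_mul_of_nonneg_right hξ (abs_nonneg y))
  nlinarith [sq_abs y, sq_nonneg (|y| / 2 - R), sq_nonneg ξ, abs_nonneg y]

lemma auxA3 (R ε ξ y : ℝ) (hR : 1 ≤ R) (hε : 0 ≤ ε) (hε1 : ε ≤ 1) (hξ : |ξ| ≤ R * ε) :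
    |ξ * y - ξ ^ 2 / 2| ≤ ε * R * (|y| + R) := by
  have h1 : |ξ * y| ≤ R * ε * |y| := by
    rw [abs_mul]; exact mul_le_mul_of_nonneg_right hξ (abs_nonneg y)
  have hRε : 0 ≤ R * ε := mul_nonneg (by linarith) hε
  have h2 : ξ ^ 2 ≤ R * ε * R := by
    nlinarith [sq_abs ξ, mul_le_mul hξ hξ (abs_nonneg ξ) hRε,
      mul_le_mul_of_nonneg_left hε1 hRε]
  have h3 := abs_sub (ξ * y) (ξ ^ 2 / 2)
  have h4 : |ξ ^ 2 / 2| = ξ ^ 2 / 2 := abs_of_nonneg (by positivity)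
  nlinarith [abs_nonneg y]

lemma auxA4 (R ξ y : ℝ) (hξ : |ξ| ≤ R) : (ξ - y) ^ 2 ≤ 2 * R ^ 2 + 2 * y ^ 2 := by
  nlinarith [sq_nonneg (ξ + y), sq_abs ξ, abs_nonneg ξ]

lemma auxA5 (R ε y : ℝ) (hε : 0 ≤ ε) (hε2 : ε ≤ 1 / 2) (hR : 1 ≤ R) :
    2 * ε + (2 * R ^ 2 + 2 * y ^ 2) * ε + R * (|y| + R) ≤ 6 * R ^ 2 * (1 + y ^ 2) := by
  have hy1 : |y| ≤ 1 + y ^ 2 := by nlinarith [sq_nonneg (|y| - 1), sq_abs y]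
  nlinarith [mul_le_mul_of_nonneg_left hy1 (show (0:ℝ) ≤ R by linarith), sq_nonneg y,
    mul_nonneg (mul_nonneg (sub_nonneg.2 hR) (show (0:ℝ) ≤ R by linarith))
      (show (0:ℝ) ≤ 1 + y ^ 2 by positivity),
    mul_nonneg (show (0:ℝ) ≤ 1 / 2 - ε by linarith) (sq_nonneg R),
    mul_nonneg (show (0:ℝ) ≤ 1 / 2 - ε by linarith) (sq_nonneg y),
    mul_nonneg (mul_nonneg (show (0:ℝ) ≤ 1 / 2 - ε by linarith) (sq_nonneg R)) (sq_nonneg y)]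

lemma auxA7 (s W : ℝ) (hs0 : 0 < s) (hs1 : s ≤ 1) (hW : 0 ≤ W) :
    -W / (2 * s) ≤ -W / 2 := by
  rw [div_le_div_iff₀ (by linarith) (by norm_num)]
  nlinarith [mul_le_mul_of_nonneg_left hs1 hW]

lemma auxA8 (R y : ℝ) : -y ^ 2 / 2 ≤ -y ^ 2 / 4 + R ^ 2 := by
  nlinarith [sq_nonneg y, sq_nonneg R]

set_option maxHeartbeats 1000000 in
lemma key_bound (R t ξ y : ℝ) (hR : 1 ≤ R) (ht : 1 ≤ t) (hξ : |ξ| ≤ R * Real.exp (-t)) :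
    |Gk t (ξ - y) - (Real.sqrt (2 * π))⁻¹ * Real.exp (-y ^ 2 / 2)| ≤
      Real.exp (-t) * (6 * R ^ 2 * Real.exp (R ^ 2)) * ((1 + y ^ 2) * Real.exp (-y ^ 2 / 4)) := by
  set ε := Real.exp (-t) with hεdef
  have hε : 0 < ε := Real.exp_pos _
  have hε2 : ε ≤ 1 / 2 := by
    have h1 : ε ≤ Real.exp (-1) := Real.exp_le_exp.2 (by linarith)
    have h2 : (2:ℝ) ≤ Real.exp 1 := by nlinarith [Real.add_one_le_exp (1:ℝ)]
    have h3 : Real.exp (-1) = (Real.exp 1)⁻¹ := by rw [Real.exp_neg]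
    rw [h3] at h1
    have : (Real.exp 1)⁻¹ ≤ 1 / 2 := by
      rw [inv_le_comm₀ (Real.exp_pos 1) (by norm_num)]; simpa using h2
    linarith
  set s := 1 - Real.exp (-2 * t) with hsdef
  have hse : Real.exp (-2 * t) = ε ^ 2 := by
    rw [hεdef, show -2 * t = -t + -t by ring, Real.exp_add]; ring
  have hs : s = 1 - ε ^ 2 := by rw [hsdef, hse]
  have hs34 : 3 / 4 ≤ s := by nlinarith
  have hs1 : s ≤ 1 := by nlinarith
  have hs0 : 0 < s := by linarith
  have hπ := Real.pi_pos
  have h2πs : 0 < 2 * π * s := by positivity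
  have hGk : Gk t (ξ - y) = (Real.sqrt (2 * π * s))⁻¹ * Real.exp (-(ξ - y) ^ 2 / (2 * s)) := by
    unfold Gk
    rw [show (-(1:ℝ)/2) = -(1/2) by ring, Real.rpow_neg h2πs.le, ← Real.sqrt_eq_rpow]
  set c2 := (Real.sqrt (2 * π))⁻¹ with hc2def
  set c1 := (Real.sqrt (2 * π * s))⁻¹ with hc1def
  set q := Real.sqrt s with hqdef
  have hq12 : 1 / 2 ≤ q := by
    have : Real.sqrt (1 / 4) ≤ q := Real.sqrt_le_sqrt (by linarith)
    rwa [show (1/4:ℝ) = (1/2) ^ 2 by norm_num, Real.sqrt_sq (by norm_num)] at this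
  have hq0 : 0 < q := by linarith
  have hq1 : q ≤ 1 := by
    have : q ≤ Real.sqrt 1 := Real.sqrt_le_sqrt hs1
    simpa using this
  have hsq : s ≤ q := by
    have := Real.mul_self_sqrt hs0.le
    nlinarith
  have hc2pos : 0 < c2 := by
    rw [hc2def]; positivity
  have hc2le : c2 ≤ 1 := by
    rw [hc2def]
    have : (1:ℝ) ≤ Real.sqrt (2 * π) := by
      rw [show (1:ℝ) = Real.sqrt 1 by simp]
      exact Real.sqrt_le_sqrt (by nlinarith [Real.pi_gt_three])
    rw [inv_le_one_iff₀]; right; linarith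
  have hc1c2 : c1 = c2 * q⁻¹ := by
    rw [hc1def, hc2def, hqdef, Real.sqrt_mul (by positivity) s, mul_inv]
  have hc1ge : c2 ≤ c1 := by
    rw [hc1c2]
    nlinarith [inv_anti₀ hq0 hq1, inv_nonneg.2 hq0.le]
  have hdiff : c1 - c2 ≤ 2 * ε ^ 2 := by
    have h1 : c2 ≤ (c2 + 2 * ε ^ 2) * q := by nlinarith
    have h2 : c2 * q⁻¹ ≤ c2 + 2 * ε ^ 2 := by
      rw [show c2 * q⁻¹ = c2 / q from (div_eq_mul_inv c2 q).symm, div_le_iff₀ hq0]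
      exact h1
    rw [hc1c2]; linarith
  rw [hGk]
  set W := (ξ - y) ^ 2 with hWdef
  have hW0 : (0:ℝ) ≤ W := sq_nonneg _
  have habs : |ξ| ≤ R := auxA1 R ε ξ hR (by linarith) hξ
  have hc_a : -W / (2 * s) ≤ -W / 2 := auxA7 s W hs0 hs1 hW0
  have hexp_c1 : -W / 2 ≤ -y ^ 2 / 4 + R ^ 2 := by rw [hWdef]; exact auxA2 R ξ y habs
  have hexp_b' : -y ^ 2 / 2 ≤ -y ^ 2 / 4 + R ^ 2 := auxA8 R y
  have hexp_a : -W / (2 * s) ≤ -y ^ 2 / 4 + R ^ 2 := le_trans hc_a hexp_c1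
  have h1s : (1:ℝ) - s = ε ^ 2 := by rw [hs]; ring
  have hab : |(-W / (2 * s)) - (-W / 2)| ≤ W * ε ^ 2 := by
    rw [abs_of_nonpos (by linarith)]
    have h2 : -((-W / (2 * s)) - (-W / 2)) = W * (1 - s) / (2 * s) := by
      field_simp; ring
    rw [h2, h1s]
    exact div_le_self (by positivity) (by linarith)
  have hbb' : |(-W / 2) - (-y ^ 2 / 2)| ≤ ε * R * (|y| + R) := by
    have h1 : (-W / 2) - (-y ^ 2 / 2) = ξ * y - ξ ^ 2 / 2 := by rw [hWdef]; ring
    rw [h1]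
    exact auxA3 R ε ξ y hR hε.le (by linarith) hξ
  set c := -y ^ 2 / 4 + R ^ 2 with hcdef
  have hEc : (0:ℝ) < Real.exp c := Real.exp_pos c
  have hEa : Real.exp (-W / (2 * s)) ≤ Real.exp c := Real.exp_le_exp.2 hexp_a
  have T1 : (c1 - c2) * Real.exp (-W / (2 * s)) ≤ 2 * ε ^ 2 * Real.exp c := by
    have u1 : (c1 - c2) * Real.exp (-W / (2 * s)) ≤ 2 * ε ^ 2 * Real.exp (-W / (2 * s)) :=
      mul_le_mul_of_nonneg_right hdiff (Real.exp_pos _).le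
    have u2 : 2 * ε ^ 2 * Real.exp (-W / (2 * s)) ≤ 2 * ε ^ 2 * Real.exp c :=
      mul_le_mul_of_nonneg_left hEa (by positivity)
    linarith
  have T2 : c2 * |Real.exp (-W / (2 * s)) - Real.exp (-W / 2)| ≤
      (2 * R ^ 2 + 2 * y ^ 2) * ε ^ 2 * Real.exp c := by
    have h1 := exp_sub_exp_le (-W / (2 * s)) (-W / 2) c hexp_a hexp_c1
    have h2 : |(-W / (2 * s)) - (-W / 2)| * Real.exp c ≤ W * ε ^ 2 * Real.exp c :=
      mul_le_mul_of_nonneg_right hab hEc.le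
    have hWb : W ≤ 2 * R ^ 2 + 2 * y ^ 2 := by rw [hWdef]; exact auxA4 R ξ y habs
    have h3 : W * ε ^ 2 * Real.exp c ≤ (2 * R ^ 2 + 2 * y ^ 2) * ε ^ 2 * Real.exp c := by
      have := mul_le_mul_of_nonneg_right hWb (sq_nonneg ε)
      exact mul_le_mul_of_nonneg_right this hEc.le
    have h4 : c2 * |Real.exp (-W / (2 * s)) - Real.exp (-W / 2)| ≤
        |Real.exp (-W / (2 * s)) - Real.exp (-W / 2)| :=
      mul_le_of_le_one_left (abs_nonneg _) hc2le
    linarith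
  have T3 : c2 * |Real.exp (-W / 2) - Real.exp (-y ^ 2 / 2)| ≤
      ε * R * (|y| + R) * Real.exp c := by
    have h1 := exp_sub_exp_le (-W / 2) (-y ^ 2 / 2) c hexp_c1 hexp_b'
    have h2 : |(-W / 2) - (-y ^ 2 / 2)| * Real.exp c ≤ ε * R * (|y| + R) * Real.exp c :=
      mul_le_mul_of_nonneg_right hbb' hEc.le
    have h4 : c2 * |Real.exp (-W / 2) - Real.exp (-y ^ 2 / 2)| ≤
        |Real.exp (-W / 2) - Real.exp (-y ^ 2 / 2)| :=
      mul_le_of_le_one_left (abs_nonneg _) hc2le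
    linarith
  have hnum := auxA5 R ε y hε.le hε2 hR
  have hexpc : Real.exp c = Real.exp (R ^ 2) * Real.exp (-y ^ 2 / 4) := by
    rw [hcdef, Real.exp_add, mul_comm]
  have tri : |c1 * Real.exp (-W / (2 * s)) - c2 * Real.exp (-y ^ 2 / 2)| ≤
      (c1 - c2) * Real.exp (-W / (2 * s)) + c2 * |Real.exp (-W / (2 * s)) - Real.exp (-W / 2)|
        + c2 * |Real.exp (-W / 2) - Real.exp (-y ^ 2 / 2)| := by
    have hd : c1 * Real.exp (-W / (2 * s)) - c2 * Real.exp (-y ^ 2 / 2) =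
        (c1 - c2) * Real.exp (-W / (2 * s)) + c2 * (Real.exp (-W / (2 * s)) - Real.exp (-W / 2))
          + c2 * (Real.exp (-W / 2) - Real.exp (-y ^ 2 / 2)) := by ring
    rw [hd]
    have ha1 := abs_add_le ((c1 - c2) * Real.exp (-W / (2 * s)) +
      c2 * (Real.exp (-W / (2 * s)) - Real.exp (-W / 2)))
      (c2 * (Real.exp (-W / 2) - Real.exp (-y ^ 2 / 2)))
    have ha2 := abs_add_le ((c1 - c2) * Real.exp (-W / (2 * s)))
      (c2 * (Real.exp (-W / (2 * s)) - Real.exp (-W / 2)))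
    have e1 : |(c1 - c2) * Real.exp (-W / (2 * s))| = (c1 - c2) * Real.exp (-W / (2 * s)) := by
      rw [abs_mul, abs_of_nonneg (sub_nonneg.2 hc1ge), abs_of_nonneg (Real.exp_pos _).le]
    have e2 : |c2 * (Real.exp (-W / (2 * s)) - Real.exp (-W / 2))| =
        c2 * |Real.exp (-W / (2 * s)) - Real.exp (-W / 2)| := by
      rw [abs_mul, abs_of_nonneg hc2pos.le]
    have e3 : |c2 * (Real.exp (-W / 2) - Real.exp (-y ^ 2 / 2))| =
        c2 * |Real.exp (-W / 2) - Real.exp (-y ^ 2 / 2)| := by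
      rw [abs_mul, abs_of_nonneg hc2pos.le]
    linarith [ha1, ha2, e1.le, e1.ge, e2.le, e2.ge, e3.le, e3.ge]
  calc |c1 * Real.exp (-W / (2 * s)) - c2 * Real.exp (-y ^ 2 / 2)|
      ≤ (c1 - c2) * Real.exp (-W / (2 * s)) + c2 * |Real.exp (-W / (2 * s)) - Real.exp (-W / 2)|
        + c2 * |Real.exp (-W / 2) - Real.exp (-y ^ 2 / 2)| := tri
    _ ≤ 2 * ε ^ 2 * Real.exp c + (2 * R ^ 2 + 2 * y ^ 2) * ε ^ 2 * Real.exp c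
        + ε * R * (|y| + R) * Real.exp c := by linarith
    _ = ε * (2 * ε + (2 * R ^ 2 + 2 * y ^ 2) * ε + R * (|y| + R)) * Real.exp c := by ring
    _ ≤ ε * (6 * R ^ 2 * (1 + y ^ 2)) * Real.exp c := by
        apply mul_le_mul_of_nonneg_right _ hEc.le
        exact mul_le_mul_of_nonneg_left hnum hε.le
    _ = ε * (6 * R ^ 2 * Real.exp (R ^ 2)) * ((1 + y ^ 2) * Real.exp (-y ^ 2 / 4)) := by
        rw [hexpc]; ring

lemma integrable_poly_gauss : Integrable (fun y : ℝ => (1 + y ^ 2) * Real.exp (-y ^ 2 / 4)) := by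
  have h1 := integrable_exp_neg_mul_sq (show (0:ℝ) < 1/4 by norm_num)
  have h2 : Integrable (fun y : ℝ => y ^ 2 * Real.exp (-(1/4 : ℝ) * y ^ 2)) := by
    have := integrable_rpow_mul_exp_neg_mul_sq (show (0:ℝ) < 1/4 by norm_num)
      (show (-1:ℝ) < 2 by norm_num)
    simpa [Real.rpow_two] using this
  refine (h1.add h2).congr (Filter.Eventually.of_forall fun y => ?_)
  show Real.exp (-(1/4) * y ^ 2) + y ^ 2 * Real.exp (-(1/4) * y ^ 2) = _
  rw [show -(1/4 : ℝ) * y ^ 2 = -y ^ 2 / 4 by ring]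
  ring

lemma integrable_gauss_phi (φ0 : ℝ → ℝ) (hcont : Continuous φ0) (M : ℝ) (hM : ∀ x, |φ0 x| ≤ M) :
    Integrable (fun y : ℝ => ((Real.sqrt (2 * π))⁻¹ * Real.exp (-y ^ 2 / 2)) * φ0 y) := by
  have hgint : Integrable (fun y : ℝ => (Real.sqrt (2 * π))⁻¹ * Real.exp (-y ^ 2 / 2)) := by
    have h := (integrable_exp_neg_mul_sq (show (0:ℝ) < 1/2 by norm_num)).const_mul
      (Real.sqrt (2 * π))⁻¹
    refine h.congr (Filter.Eventually.of_forall fun y => ?_)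
    ring_nf
  refine (hgint.const_mul M).mono' ?_ (Filter.Eventually.of_forall fun y => ?_)
  · exact ((continuous_const.mul (Real.continuous_exp.comp (by fun_prop))).mul
      hcont).aestronglyMeasurable
  · rw [Real.norm_eq_abs, abs_mul, abs_of_nonneg (show (0:ℝ) ≤ (Real.sqrt (2*π))⁻¹ * Real.exp (-y^2/2) by positivity)]
    calc ((Real.sqrt (2*π))⁻¹ * Real.exp (-y^2/2)) * |φ0 y|
        ≤ ((Real.sqrt (2*π))⁻¹ * Real.exp (-y^2/2)) * M :=
          mul_le_mul_of_nonneg_left (hM y) (by positivity)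
      _ = M * ((Real.sqrt (2*π))⁻¹ * Real.exp (-y^2/2)) := by ring

/-- The solution `φ(x,t) = (G_t * φ⁰)(x e^{−t})` of the Fokker–Planck equation converges
pointwise as `t → ∞` to `δρ = (2π)^{−1/2} ∫ e^{−y²/2} φ⁰(y) dy`, exponentially fast and
uniformly on compact intervals. -/
theorem fokker_planck_longtime (φ0 : ℝ → ℝ) (hcont : Continuous φ0)
    (M : ℝ) (hM : ∀ x, |φ0 x| ≤ M)
    (δρ : ℝ)
    (hδρ : δρ = (Real.sqrt (2 * π))⁻¹ * ∫ y : ℝ, Real.exp (-y ^ 2 / 2) * φ0 y) :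
    (∀ x : ℝ,
      Tendsto (fun t => ∫ y : ℝ, Gk t (x * Real.exp (-t) - y) * φ0 y) atTop (nhds δρ)) ∧
    (∀ a b : ℝ, ∃ C > 0, ∀ t : ℝ, 1 ≤ t → ∀ x ∈ Set.Icc a b,
      |(∫ y : ℝ, Gk t (x * Real.exp (-t) - y) * φ0 y) - δρ| ≤ C * Real.exp (-t)) := by
  have hM0 : 0 ≤ M := le_trans (abs_nonneg _) (hM 0)
  have hgφint := integrable_gauss_phi φ0 hcont M hM
  have hδρ' : δρ = ∫ y : ℝ, ((Real.sqrt (2 * π))⁻¹ * Real.exp (-y ^ 2 / 2)) * φ0 y := by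
    rw [hδρ, ← integral_const_mul]
    simp_rw [mul_assoc]
  set I := ∫ y : ℝ, (1 + y ^ 2) * Real.exp (-y ^ 2 / 4) with hIdef
  have hInn : 0 ≤ I := integral_nonneg fun y => by positivity
  have main : ∀ a b : ℝ, ∃ C > 0, ∀ t : ℝ, 1 ≤ t → ∀ x ∈ Set.Icc a b,
      |(∫ y : ℝ, Gk t (x * Real.exp (-t) - y) * φ0 y) - δρ| ≤ C * Real.exp (-t) := by
    intro a b
    set R := |a| + |b| + 1 with hRdef
    have hR1 : 1 ≤ R := by
      have := abs_nonneg a; have := abs_nonneg b; rw [hRdef]; linarith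
    set K := 6 * R ^ 2 * Real.exp (R ^ 2) with hKdef
    have hKpos : 0 < K := by rw [hKdef]; positivity
    refine ⟨M * K * I + 1, by positivity, ?_⟩
    intro t ht x hx
    set ξ := x * Real.exp (-t) with hξdef
    have hxR : |x| ≤ R := by
      rw [abs_le]
      constructor
      · have := neg_abs_le a; rw [hRdef]; linarith [hx.1, abs_nonneg b]
      · have := le_abs_self b; rw [hRdef]; linarith [hx.2, abs_nonneg a]
    have hξbound : |ξ| ≤ R * Real.exp (-t) := by
      rw [hξdef, abs_mul, abs_of_nonneg (Real.exp_pos (-t)).le]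
      exact mul_le_mul_of_nonneg_right hxR (Real.exp_pos _).le
    have key : ∀ y : ℝ, |Gk t (ξ - y) - (Real.sqrt (2 * π))⁻¹ * Real.exp (-y ^ 2 / 2)| ≤
        Real.exp (-t) * K * ((1 + y ^ 2) * Real.exp (-y ^ 2 / 4)) := by
      intro y
      have := key_bound R t ξ y hR1 ht hξbound
      rw [hKdef]
      linarith [this]
    have hGkcont : Continuous fun y : ℝ => Gk t (ξ - y) := by
      unfold Gk
      exact continuous_const.mul (Real.continuous_exp.comp (by fun_prop))
    have hdomint : Integrable (fun y : ℝ =>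
        (M * (Real.exp (-t) * K)) * ((1 + y ^ 2) * Real.exp (-y ^ 2 / 4))) :=
      integrable_poly_gauss.const_mul _
    have hdiffint : Integrable (fun y : ℝ =>
        (Gk t (ξ - y) - (Real.sqrt (2 * π))⁻¹ * Real.exp (-y ^ 2 / 2)) * φ0 y) := by
      refine hdomint.mono' ?_ (Filter.Eventually.of_forall fun y => ?_)
      · exact ((hGkcont.sub (continuous_const.mul
          (Real.continuous_exp.comp (by fun_prop)))).mul hcont).aestronglyMeasurable
      · rw [Real.norm_eq_abs, abs_mul]
        calc |Gk t (ξ - y) - (Real.sqrt (2 * π))⁻¹ * Real.exp (-y ^ 2 / 2)| * |φ0 y|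
            ≤ (Real.exp (-t) * K * ((1 + y ^ 2) * Real.exp (-y ^ 2 / 4))) * M :=
              mul_le_mul (key y) (hM y) (abs_nonneg _) (by positivity)
          _ = (M * (Real.exp (-t) * K)) * ((1 + y ^ 2) * Real.exp (-y ^ 2 / 4)) := by ring
    have hGkφint : Integrable (fun y : ℝ => Gk t (ξ - y) * φ0 y) := by
      have heq : (fun y : ℝ => Gk t (ξ - y) * φ0 y) = fun y =>
          (Gk t (ξ - y) - (Real.sqrt (2 * π))⁻¹ * Real.exp (-y ^ 2 / 2)) * φ0 y +
            ((Real.sqrt (2 * π))⁻¹ * Real.exp (-y ^ 2 / 2)) * φ0 y := by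
        funext y; ring
      rw [heq]; exact hdiffint.add hgφint
    have hsub : (∫ y : ℝ, Gk t (ξ - y) * φ0 y) - δρ =
        ∫ y : ℝ, (Gk t (ξ - y) - (Real.sqrt (2 * π))⁻¹ * Real.exp (-y ^ 2 / 2)) * φ0 y := by
      rw [hδρ', ← integral_sub hGkφint hgφint]
      congr 1; funext y; ring
    rw [hsub]
    have h1 : |∫ y : ℝ, (Gk t (ξ - y) - (Real.sqrt (2 * π))⁻¹ * Real.exp (-y ^ 2 / 2)) * φ0 y| ≤
        ∫ y : ℝ, |(Gk t (ξ - y) - (Real.sqrt (2 * π))⁻¹ * Real.exp (-y ^ 2 / 2)) * φ0 y| := by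
      simpa only [Real.norm_eq_abs] using
        norm_integral_le_integral_norm (μ := volume)
          (fun y : ℝ => (Gk t (ξ - y) - (Real.sqrt (2 * π))⁻¹ * Real.exp (-y ^ 2 / 2)) * φ0 y)
    have h2 : (∫ y : ℝ, |(Gk t (ξ - y) - (Real.sqrt (2 * π))⁻¹ * Real.exp (-y ^ 2 / 2)) * φ0 y|) ≤
        ∫ y : ℝ, (M * (Real.exp (-t) * K)) * ((1 + y ^ 2) * Real.exp (-y ^ 2 / 4)) := by
      refine integral_mono hdiffint.abs hdomint fun y => ?_
      rw [abs_mul]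
      calc |Gk t (ξ - y) - (Real.sqrt (2 * π))⁻¹ * Real.exp (-y ^ 2 / 2)| * |φ0 y|
          ≤ (Real.exp (-t) * K * ((1 + y ^ 2) * Real.exp (-y ^ 2 / 4))) * M :=
            mul_le_mul (key y) (hM y) (abs_nonneg _) (by positivity)
        _ = (M * (Real.exp (-t) * K)) * ((1 + y ^ 2) * Real.exp (-y ^ 2 / 4)) := by ring
    have h3 : (∫ y : ℝ, (M * (Real.exp (-t) * K)) * ((1 + y ^ 2) * Real.exp (-y ^ 2 / 4)))
        = M * (Real.exp (-t) * K) * I := by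
      rw [integral_const_mul, hIdef]
    have hεpos : (0:ℝ) < Real.exp (-t) := Real.exp_pos _
    calc |∫ y : ℝ, (Gk t (ξ - y) - (Real.sqrt (2 * π))⁻¹ * Real.exp (-y ^ 2 / 2)) * φ0 y|
        ≤ M * (Real.exp (-t) * K) * I := by rw [← h3]; linarith
      _ = (M * K * I) * Real.exp (-t) := by ring
      _ ≤ (M * K * I + 1) * Real.exp (-t) := by nlinarith
  refine ⟨?_, main⟩
  intro x
  obtain ⟨C, hC, hbound⟩ := main x x
  rw [tendsto_iff_norm_sub_tendsto_zero]
  have hg0 : Tendsto (fun t : ℝ => C * Real.exp (-t)) atTop (nhds 0) := by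
    simpa using (Real.tendsto_exp_neg_atTop_nhds_zero).const_mul C
  refine squeeze_zero' ?_ ?_ hg0
  · exact Filter.Eventually.of_forall fun t => norm_nonneg _
  · filter_upwards [Filter.eventually_ge_atTop (1:ℝ)] with t ht
    have := hbound t ht x ⟨le_refl x, le_refl x⟩
    simpa [Real.norm_eq_abs] using this
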